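/- arXiv:1605.09249 — 2 statements merged into one kernel-verified Lean document; each statement's English description precedes it below -/
import Mathlib

section
/- For every q ∈ (0,1), every x ∈ ℝ^n, and every integer s with 1 ≤ s ≤ n, the best s-term approximation error satisfies σ_s(x) ≤ q (1−q)^{1/q − 1} s^{1 − 1/q} ‖x‖_q, where ‖x‖_q = (∑_{i=1}^n |x[i]|^q)^{1/q}. -/
open Finset

/-- A vector `x ∈ ℝⁿ` is `s`-sparse if it has at most `s` nonzero entries. -/
def IsSparse {n : ℕ} (s : ℕ) (x : Fin n → ℝ) : Prop :=
  (Finset.univ.filter (fun i => x i ≠ 0)).card ≤ s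

/-- The ℓ¹-norm on `ℝⁿ`. -/
noncomputable def l1norm {n : ℕ} (x : Fin n → ℝ) : ℝ := ∑ i, |x i|

/-- The ℓ^q-(quasi-)norm on `ℝⁿ`: `(∑ i |x i|^q)^(1/q)`. -/
noncomputable def lqnorm {n : ℕ} (q : ℝ) (x : Fin n → ℝ) : ℝ :=
  (∑ i, |x i| ^ q) ^ (1 / q)

/-- The best `s`-term approximation error of `x` with respect to the ℓ¹-norm. -/
noncomputable def bestApproxErr {n : ℕ} (s : ℕ) (x : Fin n → ℝ) : ℝ :=
  sInf {r : ℝ | ∃ z : Fin n → ℝ, IsSparse s z ∧ r = l1norm (fun i => x i - z i)}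

/-!
Keep the `s` largest entries of `x` and let `b` be the smallest of them. Every discarded entry is at
most `b`, so the discarded mass is at most `b ^ (1 - q) * (M - s * b ^ q)` with `M = ‖x‖_q ^ q`.
Writing `A = s * b ^ q`, this is `s ^ (1 - 1/q) * A ^ (1/q - 1) * (M - A)`, and weighted AM-GM
shows that `A ^ (1/q - 1) * (M - A)` is largest at `A = (1 - q) * M`.
-/

theorem exists_card_eq_forall_mem_le {ι α : Type*} [Fintype ι] [DecidableEq ι] [LinearOrder α]
    (f : ι → α) {s : ℕ} (hs : s ≤ Fintype.card ι) :
    ∃ S : Finset ι, #S = s ∧ ∀ i ∈ S, ∀ j ∉ S, f j ≤ f i := by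
  induction s with
  | zero => exact ⟨∅, rfl, by simp⟩
  | succ s ih =>
    obtain ⟨S, hcard, hdom⟩ := ih (by omega)
    have hne : Sᶜ.Nonempty := by
      rw [← card_pos, card_compl]
      omega
    obtain ⟨j, hjS, hjmax⟩ := exists_max_image Sᶜ f hne
    rw [mem_compl] at hjS
    refine ⟨insert j S, by rw [card_insert_of_notMem hjS, hcard], fun i hi k hk => ?_⟩
    rw [mem_insert, not_or] at hk
    rcases mem_insert.mp hi with rfl | hi
    · exact hjmax k (mem_compl.mpr hk.2)
    · exact hdom i hi k hk.2

theorem rpow_sub_one_div_mul_sub_le {q A M : ℝ} (hq0 : 0 < q) (hq1 : q < 1)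
    (hA : 0 ≤ A) (hAM : A ≤ M) :
    A ^ (1 / q - 1) * (M - A) ≤ q * (1 - q) ^ (1 / q - 1) * M ^ (1 / q) := by
  have h1q : 0 < 1 - q := by linarith
  have hMA : 0 ≤ M - A := by linarith
  have amgm : (A / (1 - q)) ^ (1 - q) * ((M - A) / q) ^ q ≤ M := by
    convert Real.geom_mean_le_arith_mean2_weighted h1q.le hq0.le (div_nonneg hA h1q.le)
      (div_nonneg hMA hq0.le) (by ring) using 1
    field_simp
    ring
  have hpow := Real.rpow_le_rpow (by positivity) amgm (one_div_nonneg.mpr hq0.le)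
  have hexp : (1 - q) * (1 / q) = 1 / q - 1 := by field_simp
  rw [Real.mul_rpow (by positivity) (by positivity), ← Real.rpow_mul (by positivity), hexp,
    one_div q, Real.rpow_rpow_inv (by positivity) hq0.ne', ← one_div,
    Real.div_rpow hA h1q.le, div_mul_div_comm, div_le_iff₀ (by positivity)] at hpow
  linarith

theorem sum_le_rpow_mul_sum_rpow {ι : Type*} {T : Finset ι} {f : ι → ℝ} {b q : ℝ} (hq : q ≤ 1)
    (hf : ∀ j ∈ T, 0 ≤ f j) (hfb : ∀ j ∈ T, f j ≤ b) :
    ∑ j ∈ T, f j ≤ b ^ (1 - q) * ∑ j ∈ T, f j ^ q := by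
  rw [mul_sum]
  refine sum_le_sum fun j hj => ?_
  calc f j = f j ^ (1 - q) * f j ^ q := by
        rw [← Real.rpow_add' (hf j hj) (by norm_num), sub_add_cancel, Real.rpow_one]
    _ ≤ b ^ (1 - q) * f j ^ q :=
        mul_le_mul_of_nonneg_right (Real.rpow_le_rpow (hf j hj) (hfb j hj) (by linarith))
          (Real.rpow_nonneg (hf j hj) q)

theorem sum_compl_le_of_forall_mem_le {ι : Type*} [Fintype ι] [DecidableEq ι] {f : ι → ℝ}
    {q : ℝ} (hq0 : 0 < q) (hq1 : q < 1) (hf : ∀ i, 0 ≤ f i) {S : Finset ι} (hS : S.Nonempty)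
    (hdom : ∀ i ∈ S, ∀ j ∉ S, f j ≤ f i) :
    ∑ j ∈ Sᶜ, f j ≤
      q * (1 - q) ^ (1 / q - 1) * (#S : ℝ) ^ (1 - 1 / q) * (∑ i, f i ^ q) ^ (1 / q) := by
  set M := ∑ i, f i ^ q
  set b := S.inf' hS f
  have hb0 : 0 ≤ b := le_inf' hS f fun i _ => hf i
  have hsmall : ∀ j ∈ Sᶜ, f j ≤ b := fun j hj =>
    le_inf' hS f fun i hi => hdom i hi j (mem_compl.mp hj)
  set A := (#S : ℝ) * b ^ q
  have hA : A ≤ ∑ i ∈ S, f i ^ q := by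
    simpa using card_nsmul_le_sum S (f · ^ q) (b ^ q) fun i hi =>
      Real.rpow_le_rpow hb0 (inf'_le f hi) hq0.le
  have htail : ∑ j ∈ Sᶜ, f j ^ q = M - ∑ i ∈ S, f i ^ q :=
    eq_sub_of_add_eq (sum_compl_add_sum S _)
  have hAM : A ≤ M := by
    have := sum_nonneg fun j (_ : j ∈ Sᶜ) => Real.rpow_nonneg (hf j) q
    linarith
  have hbA : b ^ (1 - q) = (#S : ℝ) ^ (1 - 1 / q) * A ^ (1 / q - 1) := by
    have hS0 : (0 : ℝ) < #S := by exact_mod_cast hS.card_pos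
    rw [Real.mul_rpow hS0.le (by positivity), ← Real.rpow_mul hb0, ← mul_assoc,
      ← Real.rpow_add hS0, sub_add_sub_cancel', sub_self, Real.rpow_zero, one_mul,
      mul_sub, mul_one_div_cancel hq0.ne', mul_one]
  calc ∑ j ∈ Sᶜ, f j ≤ b ^ (1 - q) * ∑ j ∈ Sᶜ, f j ^ q :=
        sum_le_rpow_mul_sum_rpow hq1.le (fun j _ => hf j) hsmall
    _ ≤ b ^ (1 - q) * (M - A) := by
        rw [htail]
        gcongr
    _ = (#S : ℝ) ^ (1 - 1 / q) * (A ^ (1 / q - 1) * (M - A)) := by rw [hbA]; ring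
    _ ≤ (#S : ℝ) ^ (1 - 1 / q) * (q * (1 - q) ^ (1 / q - 1) * M ^ (1 / q)) :=
        mul_le_mul_of_nonneg_left (rpow_sub_one_div_mul_sub_le hq0 hq1 (by positivity) hAM)
          (by positivity)
    _ = _ := by ring

theorem bestApproxErr_le_sum_compl {n s : ℕ} (x : Fin n → ℝ) {S : Finset (Fin n)} (hS : #S ≤ s) :
    bestApproxErr s x ≤ ∑ i ∈ Sᶜ, |x i| := by
  set z : Fin n → ℝ := fun i => if i ∈ S then x i else 0
  have hz : IsSparse s z := by
    refine le_trans (card_le_card fun i hi => ?_) hS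
    by_contra hiS
    simp [z, hiS] at hi
  have hbdd : BddBelow {r : ℝ | ∃ z : Fin n → ℝ, IsSparse s z ∧ r = l1norm (fun i => x i - z i)} :=
    ⟨0, by rintro _ ⟨z, -, rfl⟩; exact sum_nonneg fun i _ => abs_nonneg _⟩
  refine csInf_le hbdd ⟨z, hz, ?_⟩
  have hout : ∀ i ∈ Sᶜ, |x i - z i| = |x i| := fun i hi => by simp [z, mem_compl.mp hi]
  have hin : ∀ i ∈ S, |x i - z i| = 0 := fun i hi => by simp [z, hi]
  rw [l1norm, ← sum_compl_add_sum S, sum_congr rfl hout, sum_eq_zero hin, add_zero]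

/-- Compressibility estimate: for `q ∈ (0,1)`,
`σ_s(x) ≤ q (1-q)^{1/q - 1} s^{1 - 1/q} ‖x‖_q`. -/
theorem bestApproxErr_le (q : ℝ) (hq0 : 0 < q) (hq1 : q < 1)
    (n : ℕ) (x : Fin n → ℝ) (s : ℕ) (hs1 : 1 ≤ s) (hsn : s ≤ n) :
    bestApproxErr s x ≤
      q * (1 - q) ^ (1 / q - 1) * (s : ℝ) ^ (1 - 1 / q) * lqnorm q x := by
  obtain ⟨S, hcard, hdom⟩ := exists_card_eq_forall_mem_le (fun i => |x i|) (by simpa using hsn)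
  have hS : S.Nonempty := card_pos.mp (by omega)
  calc bestApproxErr s x ≤ ∑ i ∈ Sᶜ, |x i| := bestApproxErr_le_sum_compl x hcard.le
    _ ≤ _ := hcard ▸ sum_compl_le_of_forall_mem_le hq0 hq1 (fun i => abs_nonneg _) hS hdom
end

section
/- For every θ ∈ (0,1) there exists a constant c_θ > 0 such that the following holds for all n, s ∈ ℕ with 1 ≤ s ≤ n: setting d := ⌈(2·log(n/s) + 2)/θ⌉, for every m with c_θ · s · (log(n/s) + 1) ≤ m ≤ n there exists a left d-regular bipartite graph with n left vertices and m right vertices that is an (s, d, θ)-lossless expander. -/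
open Finset

/-- The set of right neighbors of a set `I` of left vertices in a bipartite graph with
edge set `E ⊆ L × R`. -/
def rightNbrs {n m : ℕ} (E : Finset (Fin n × Fin m)) (I : Finset (Fin n)) :
    Finset (Fin m) :=
  Finset.univ.filter (fun j => ∃ i ∈ I, (i, j) ∈ E)

/-- A bipartite graph with edge set `E` is left `d`-regular if every left vertex has
exactly `d` right neighbors. -/
def LeftRegular {n m : ℕ} (E : Finset (Fin n × Fin m)) (d : ℕ) : Prop :=
  ∀ i : Fin n, (rightNbrs E {i}).card = d

/-- A left `d`-regular bipartite graph is an `(s, d, θ)`-lossless expander if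
`#N(I) ≥ (1-θ)·d·#I` for all left vertex sets `I` with `#I ≤ s`. -/
def IsLosslessExpander {n m : ℕ} (E : Finset (Fin n × Fin m)) (s d : ℕ) (θ : ℝ) : Prop :=
  LeftRegular E d ∧
    ∀ I : Finset (Fin n), I.card ≤ s →
      (1 - θ) * d * I.card ≤ (rightNbrs E I).card

/-!
Choose the neighbourhood of every left vertex among the `d`-subsets of the right side and
count. A set `I` with `#I = k ≤ s` violates the expansion bound only if `N(I)` lies in some `T`
with `#T = t_k := ⌊(1-θ)dk⌋`, so by a union bound over `k`, `I` and `T` the fraction of bad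
choices is at most `∑_{k ≥ 1} C(n,k) C(m,t_k) (C(t_k,d) / C(m,d))^k`. With `C(a,b) ≤ (ea/b)^b`,
`C(t,d) ≤ C(m,d) (t/m)^d`, `θd ≥ 2 log(n/s) + 2` and `m ≥ e^{3/θ} s d`, the `k`-th term is at
most `e^{-k}`, and `∑_{k ≥ 1} e^{-k} < 1`.
-/
open Real

theorem Nat.choose_le_exp_mul_div_pow (n k : ℕ) : (n.choose k : ℝ) ≤ exp k * (n / k) ^ k := by
  calc (n.choose k : ℝ) ≤ n ^ k / k.factorial := Nat.choose_le_pow_div k n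
    _ = (n / k) ^ k * (k ^ k / k.factorial) := by
      rcases k.eq_zero_or_pos with rfl | hk
      · simp
      · rw [mul_div_assoc', ← mul_pow, div_mul_cancel₀ _ (by positivity)]
    _ ≤ (n / k) ^ k * exp k := by
      gcongr
      exact pow_div_factorial_le_exp (x := k) k.cast_nonneg k
    _ = exp k * (n / k) ^ k := mul_comm _ _

theorem Nat.descFactorial_mul_pow_le {t m : ℕ} (h : t ≤ m) (d : ℕ) :
    t.descFactorial d * m ^ d ≤ m.descFactorial d * t ^ d := by
  induction d with
  | zero => simp
  | succ d ih =>
    have hstep : (t - d) * m ≤ (m - d) * t := by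
      rw [Nat.sub_mul, Nat.sub_mul, Nat.mul_comm m t]
      exact Nat.sub_le_sub_left (Nat.mul_le_mul_left d h) _
    calc t.descFactorial (d + 1) * m ^ (d + 1)
          = (t - d) * m * (t.descFactorial d * m ^ d) := by rw [Nat.descFactorial_succ]; ring
      _ ≤ (m - d) * t * (m.descFactorial d * t ^ d) := Nat.mul_le_mul hstep ih
      _ = m.descFactorial (d + 1) * t ^ (d + 1) := by rw [Nat.descFactorial_succ]; ring

theorem Nat.choose_le_choose_mul_div_pow {t m : ℕ} (h : t ≤ m) (d : ℕ) :
    (t.choose d : ℝ) ≤ m.choose d * (t / m) ^ d := by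
  rcases m.eq_zero_or_pos with rfl | hm
  · obtain rfl := Nat.le_zero.1 h
    rcases d.eq_zero_or_pos with rfl | hd <;> simp [*, Nat.choose_eq_zero_of_lt]
  have hnat : t.choose d * m ^ d ≤ m.choose d * t ^ d := by
    have := Nat.descFactorial_mul_pow_le h d
    rw [Nat.descFactorial_eq_factorial_mul_choose, Nat.descFactorial_eq_factorial_mul_choose,
      Nat.mul_assoc, Nat.mul_assoc] at this
    exact Nat.le_of_mul_le_mul_left this d.factorial_pos
  rw [div_pow, ← mul_div_assoc, le_div_iff₀ (by positivity)]
  exact_mod_cast hnat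

section Counting

variable {α β : Type*} [Fintype α] [DecidableEq α] [Fintype β] {d : ℕ}

def regularMaps (α β : Type*) [Fintype α] [DecidableEq α] [Fintype β] (d : ℕ) :
    Finset (α → Finset β) :=
  Fintype.piFinset fun _ => univ.powersetCard d

theorem mem_regularMaps {ω : α → Finset β} : ω ∈ regularMaps α β d ↔ ∀ i, #(ω i) = d := by
  simp [regularMaps]

theorem card_regularMaps :
    #(regularMaps α β d) = (Fintype.card β).choose d ^ Fintype.card α := by
  simp [regularMaps, Fintype.card_piFinset]

variable [DecidableEq β]

theorem card_filter_forall_subset (I : Finset α) (T : Finset β) :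
    #{ω ∈ regularMaps α β d | ∀ i ∈ I, ω i ⊆ T} =
      (#T).choose d ^ #I * (Fintype.card β).choose d ^ (Fintype.card α - #I) := by
  have hfilter : {ω ∈ regularMaps α β d | ∀ i ∈ I, ω i ⊆ T} =
      Fintype.piFinset fun i => if i ∈ I then T.powersetCard d else univ.powersetCard d := by
    ext ω
    simp only [regularMaps, mem_filter, Fintype.mem_piFinset, mem_powersetCard, subset_univ,
      true_and]
    grind
  have hcompl : #{i | i ∉ I} = Fintype.card α - #I := by
    rw [← card_compl]
    congr 1
    ext
    simp
  rw [hfilter, Fintype.card_piFinset]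
  simp only [apply_ite card, card_powersetCard, card_univ, prod_ite, prod_const, hcompl]
  simp

theorem card_filter_card_biUnion_le (I : Finset α) {t : ℕ} (ht : t ≤ Fintype.card β) :
    #{ω ∈ regularMaps α β d | #(I.biUnion ω) ≤ t} ≤
      (Fintype.card β).choose t *
        (t.choose d ^ #I * (Fintype.card β).choose d ^ (Fintype.card α - #I)) := by
  calc #{ω ∈ regularMaps α β d | #(I.biUnion ω) ≤ t}
      ≤ #((univ.powersetCard t).biUnion fun T =>
          {ω ∈ regularMaps α β d | ∀ i ∈ I, ω i ⊆ T}) := by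
        refine card_le_card fun ω hω => ?_
        rw [mem_filter] at hω
        obtain ⟨T, hNT, -, hT⟩ := exists_subsuperset_card_eq (subset_univ _) hω.2 (by simpa)
        simp only [mem_biUnion, mem_powersetCard, mem_filter]
        exact ⟨T, ⟨subset_univ T, hT⟩, hω.1,
          fun i hi => (subset_biUnion_of_mem ω hi).trans hNT⟩
    _ ≤ ∑ T ∈ univ.powersetCard t, #{ω ∈ regularMaps α β d | ∀ i ∈ I, ω i ⊆ T} :=
        card_biUnion_le
    _ = _ := by
        rw [sum_congr rfl fun T hT => by
          rw [card_filter_forall_subset, (mem_powersetCard.1 hT).2], sum_const,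
          card_powersetCard, card_univ, smul_eq_mul]

theorem card_filter_exists_card_biUnion_le (s : ℕ) (t : ℕ → ℕ)
    (ht : ∀ k ∈ Icc 1 s, t k ≤ Fintype.card β) :
    #{ω ∈ regularMaps α β d | ∃ I : Finset α, #I ∈ Icc 1 s ∧ #(I.biUnion ω) ≤ t #I} ≤
      ∑ k ∈ Icc 1 s, (Fintype.card α).choose k * ((Fintype.card β).choose (t k) *
        ((t k).choose d ^ k * (Fintype.card β).choose d ^ (Fintype.card α - k))) := by
  calc #{ω ∈ regularMaps α β d | ∃ I : Finset α, #I ∈ Icc 1 s ∧ #(I.biUnion ω) ≤ t #I}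
      ≤ #((Icc 1 s).biUnion fun k => (univ.powersetCard k).biUnion fun I =>
          {ω ∈ regularMaps α β d | #(I.biUnion ω) ≤ t k}) := by
        refine card_le_card fun ω hω => ?_
        obtain ⟨hω, I, hI, hN⟩ := mem_filter.1 hω
        simp only [mem_biUnion, mem_powersetCard, mem_filter]
        exact ⟨#I, hI, I, ⟨subset_univ I, rfl⟩, hω, hN⟩
    _ ≤ ∑ k ∈ Icc 1 s, ∑ I ∈ univ.powersetCard k,
          #{ω ∈ regularMaps α β d | #(I.biUnion ω) ≤ t k} :=
        card_biUnion_le.trans (sum_le_sum fun k _ => card_biUnion_le)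
    _ ≤ ∑ k ∈ Icc 1 s, ∑ I ∈ univ.powersetCard k, (Fintype.card β).choose (t k) *
          ((t k).choose d ^ k * (Fintype.card β).choose d ^ (Fintype.card α - k)) :=
        sum_le_sum fun k hk => sum_le_sum fun I hI => by
          simpa only [(mem_powersetCard.1 hI).2] using
            card_filter_card_biUnion_le I (ht k hk)
    _ = _ := by simp only [sum_const, card_powersetCard, card_univ, smul_eq_mul]

theorem exists_regular_forall_lt_card_biUnion (s : ℕ) (t : ℕ → ℕ)
    (ht : ∀ k ∈ Icc 1 s, t k ≤ Fintype.card β)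
    (hsum : ∑ k ∈ Icc 1 s, (Fintype.card α).choose k * ((Fintype.card β).choose (t k) *
        ((t k).choose d ^ k * (Fintype.card β).choose d ^ (Fintype.card α - k))) <
      (Fintype.card β).choose d ^ Fintype.card α) :
    ∃ ω : α → Finset β, (∀ i, #(ω i) = d) ∧
      ∀ I : Finset α, #I ∈ Icc 1 s → t #I < #(I.biUnion ω) := by
  obtain ⟨ω, hω, hgood⟩ := exists_mem_notMem_of_card_lt_card
    ((card_filter_exists_card_biUnion_le (α := α) (d := d) s t ht).trans_lt
      (by rwa [card_regularMaps]))
  simp only [mem_filter, not_and, not_exists, not_le] at hgood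
  exact ⟨ω, mem_regularMaps.1 hω, hgood hω⟩

end Counting

def edgesOf {n m : ℕ} (ω : Fin n → Finset (Fin m)) : Finset (Fin n × Fin m) :=
  {p | p.2 ∈ ω p.1}

theorem rightNbrs_edgesOf {n m : ℕ} (ω : Fin n → Finset (Fin m)) (I : Finset (Fin n)) :
    rightNbrs (edgesOf ω) I = I.biUnion ω := by
  ext j
  simp [rightNbrs, edgesOf]

theorem sum_exp_neg_lt_one (s : ℕ) : ∑ k ∈ Icc 1 s, exp (-(k : ℝ)) < 1 := by
  have he : exp (-1) < 1 / 2 := by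
    rw [exp_neg, inv_lt_comm₀ (exp_pos 1) (by norm_num)]
    linarith [exp_one_gt_d9]
  calc ∑ k ∈ Icc 1 s, exp (-(k : ℝ)) = ∑ k ∈ Ico 1 (s + 1), exp (-1) ^ k := by
        rw [Ico_add_one_right_eq_Icc]
        simp [← exp_nat_mul]
    _ ≤ exp (-1) ^ 1 / (1 - exp (-1)) :=
        geom_sum_Ico_le_of_lt_one (exp_pos _).le (by linarith)
    _ < 1 := by
        rw [pow_one, div_lt_one (by linarith)]
        linarith

-- The logarithm of the `k`-th union-bound term, with `L = log (n / s)`, `u = log (s / k)` and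
-- `r = log (m / t)`.
theorem log_union_term_le {θ k t d L u r : ℝ} (hθ0 : 0 < θ) (hθ1 : θ < 1) (hk : 0 ≤ k)
    (hL : 0 ≤ L) (hu : 0 ≤ u) (ht : t ≤ (1 - θ) * d * k) (hd : 2 * L + 2 ≤ θ * d)
    (hr : 3 / θ + u ≤ r) :
    k + k * (L + u) + t + t * r - d * k * r ≤ -k := by
  have hd0 : 0 ≤ d := by
    by_contra! h
    nlinarith
  have hr0 : 0 ≤ r := by
    have : 0 < 3 / θ := by positivity
    linarith
  have hgap : θ * d * k * (3 / θ + u) ≤ (d * k - t) * r :=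
    mul_le_mul (by linarith) hr (by positivity) (by nlinarith)
  have hexpand : θ * d * k * (3 / θ + u) = 3 * d * k + θ * d * (k * u) := by
    field_simp
  nlinarith [mul_le_mul_of_nonneg_right hd (mul_nonneg hk hu), mul_nonneg hk hu,
    mul_nonneg hL hk, mul_nonneg hd0 hk]

theorem choose_mul_choose_mul_choose_pow_le {θ : ℝ} (hθ0 : 0 < θ) (hθ1 : θ < 1)
    {n m s d k t : ℕ} (hk : 1 ≤ k) (hks : k ≤ s) (hsn : s ≤ n)
    (hd : 2 * log (n / s) + 2 ≤ θ * d) (hm : exp (3 / θ) * s * d ≤ m)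
    (ht : (t : ℝ) ≤ (1 - θ) * d * k) :
    (n.choose k : ℝ) * m.choose t * t.choose d ^ k ≤ exp (-k) * m.choose d ^ k := by
  have hkR : (0 : ℝ) < k := by exact_mod_cast hk
  have hsR : (0 : ℝ) < s := by exact_mod_cast hk.trans hks
  have hnR : (0 : ℝ) < n := by exact_mod_cast (hk.trans hks).trans hsn
  have hL : 0 ≤ log (n / s) := log_nonneg ((one_le_div hsR).2 (by exact_mod_cast hsn))
  have hd0 : 0 < d := Nat.cast_pos.1 (pos_of_mul_pos_right (by linarith) hθ0.le)
  obtain rfl | htpos := t.eq_zero_or_pos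
  · simp only [Nat.choose_eq_zero_of_lt hd0, CharP.cast_eq_zero,
      zero_pow (Nat.one_le_iff_ne_zero.1 hk), mul_zero]
    positivity
  have htR : (0 : ℝ) < t := by exact_mod_cast htpos
  have htdk : (t : ℝ) ≤ d * k := ht.trans (by nlinarith [mul_pos hθ0 hkR])
  have htm : t ≤ m := by
    have hdkm : (d : ℝ) * k ≤ m :=
      calc (d : ℝ) * k ≤ 1 * s * d := by rw [one_mul, mul_comm]; gcongr
        _ ≤ exp (3 / θ) * s * d := by gcongr; exact one_le_exp (by positivity)
        _ ≤ m := hm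
    exact_mod_cast htdk.trans hdkm
  have hmR : (0 : ℝ) < m := by exact_mod_cast htpos.trans_le htm
  set r := log (m / t)
  have hu : 0 ≤ log (s / k) := log_nonneg ((one_le_div hkR).2 (by exact_mod_cast hks))
  have hlog_nk : log (n / k) = log (n / s) + log (s / k) := by
    rw [← log_mul (by positivity) (by positivity), div_mul_div_cancel₀ hsR.ne']
  have hr : 3 / θ + log (s / k) ≤ r :=
    calc 3 / θ + log (s / k) = log (exp (3 / θ) * (s / k)) := by
          rw [log_mul (exp_pos _).ne' (by positivity), log_exp]
      _ ≤ r := by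
          refine log_le_log (by positivity) ((le_div_iff₀ htR).2 ?_)
          calc exp (3 / θ) * (s / k) * t ≤ exp (3 / θ) * (s / k) * (d * k) := by gcongr
            _ = exp (3 / θ) * s * d := by field_simp
            _ ≤ m := hm
  have hpow : ∀ (x : ℝ) (j : ℕ), 0 < x → x ^ j = exp (j * log x) := fun x j hx => by
    rw [exp_nat_mul, exp_log hx]
  calc (n.choose k : ℝ) * m.choose t * t.choose d ^ k
      ≤ (exp k * (n / k) ^ k) * (exp t * (m / t) ^ t) * (m.choose d * (t / m) ^ d) ^ k := by
        gcongr
        · exact Nat.choose_le_exp_mul_div_pow n k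
        · exact Nat.choose_le_exp_mul_div_pow m t
        · exact Nat.choose_le_choose_mul_div_pow htm d
    _ = exp (k + k * log (n / k) + t + t * r + k * (d * -r)) * m.choose d ^ k := by
        rw [hpow (n / k) k (by positivity), hpow (m / t) t (by positivity),
          hpow (t / m) d (by positivity), ← inv_div (m : ℝ), log_inv, mul_pow, ← exp_nat_mul]
        simp only [exp_add]
        ring
    _ = exp (k + k * (log (n / s) + log (s / k)) + t + t * r - d * k * r) * m.choose d ^ k := by
        rw [hlog_nk]
        ring_nf
    _ ≤ exp (-k) * m.choose d ^ k := by
        gcongr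
        exact log_union_term_le hθ0 hθ1 hkR.le hL hu ht hd hr

theorem sum_choose_mul_choose_mul_choose_pow_lt {θ : ℝ} (hθ0 : 0 < θ) (hθ1 : θ < 1)
    {n m s d : ℕ} (hsn : s ≤ n) (hdm : d ≤ m) (hd : 2 * log (n / s) + 2 ≤ θ * d)
    (hm : exp (3 / θ) * s * d ≤ m) :
    ∑ k ∈ Icc 1 s, n.choose k * (m.choose ⌊(1 - θ) * d * k⌋₊ *
      (⌊(1 - θ) * d * k⌋₊.choose d ^ k * m.choose d ^ (n - k))) < m.choose d ^ n := by
  have hC : (0 : ℝ) < m.choose d := by exact_mod_cast Nat.choose_pos hdm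
  rw [← Nat.cast_lt (α := ℝ)]
  push_cast
  calc ∑ k ∈ Icc 1 s, (n.choose k : ℝ) * (m.choose ⌊(1 - θ) * d * k⌋₊ *
        (⌊(1 - θ) * d * k⌋₊.choose d ^ k * m.choose d ^ (n - k)))
      ≤ ∑ k ∈ Icc 1 s, exp (-k) * (m.choose d : ℝ) ^ n := by
        refine sum_le_sum fun k hk => ?_
        set t := ⌊(1 - θ) * d * k⌋₊
        obtain ⟨hk1, hks⟩ := mem_Icc.1 hk
        have hbound := choose_mul_choose_mul_choose_pow_le hθ0 hθ1 hk1 hks hsn hd hm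
          (Nat.floor_le (by nlinarith [mul_nonneg d.cast_nonneg k.cast_nonneg (α := ℝ)]) :
            (t : ℝ) ≤ (1 - θ) * d * k)
        calc (n.choose k : ℝ) * (m.choose t * (t.choose d ^ k * m.choose d ^ (n - k)))
            = (n.choose k * m.choose t * t.choose d ^ k) * m.choose d ^ (n - k) := by ring
          _ ≤ exp (-k) * m.choose d ^ k * m.choose d ^ (n - k) := by gcongr
          _ = exp (-k) * (m.choose d : ℝ) ^ n := by
              rw [mul_assoc, ← pow_add, Nat.add_sub_cancel' (hks.trans hsn)]
    _ < m.choose d ^ n := by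
        rw [← sum_mul]
        exact mul_lt_of_lt_one_left (pow_pos hC n) (sum_exp_neg_lt_one s)

theorem exists_isLosslessExpander {θ : ℝ} (hθ0 : 0 < θ) (hθ1 : θ < 1) {n m s d : ℕ}
    (hs : 1 ≤ s) (hsn : s ≤ n) (hd : 2 * log (n / s) + 2 ≤ θ * d)
    (hm : exp (3 / θ) * s * d ≤ m) :
    ∃ E : Finset (Fin n × Fin m), IsLosslessExpander E s d θ := by
  have hsd : (d : ℝ) * s ≤ m :=
    calc (d : ℝ) * s = 1 * s * d := by ring
      _ ≤ exp (3 / θ) * s * d := by gcongr; exact one_le_exp (by positivity)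
      _ ≤ m := hm
  have hdm : d ≤ m := by
    have : (d : ℝ) ≤ d * s := le_mul_of_one_le_right d.cast_nonneg (by exact_mod_cast hs)
    exact_mod_cast this.trans hsd
  have htm : ∀ k ∈ Icc 1 s, ⌊(1 - θ) * d * k⌋₊ ≤ Fintype.card (Fin m) := by
    intro k hk
    have hdk : (d : ℝ) * k ≤ d * s :=
      mul_le_mul_of_nonneg_left (by exact_mod_cast (mem_Icc.1 hk).2) d.cast_nonneg
    rw [Fintype.card_fin]
    refine Nat.floor_le_of_le (le_trans ?_ hsd)
    nlinarith [mul_nonneg d.cast_nonneg k.cast_nonneg (α := ℝ)]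
  obtain ⟨ω, hreg, hexp⟩ := exists_regular_forall_lt_card_biUnion (α := Fin n) s
    (fun k => ⌊(1 - θ) * d * k⌋₊) htm (by
      simpa only [Fintype.card_fin] using
        sum_choose_mul_choose_mul_choose_pow_lt hθ0 hθ1 hsn hdm hd hm)
  have hregE : LeftRegular (edgesOf ω) d := fun i => by
    rw [rightNbrs_edgesOf, singleton_biUnion, hreg]
  refine ⟨edgesOf ω, hregE, fun I hI => ?_⟩
  rw [rightNbrs_edgesOf]
  rcases I.eq_empty_or_nonempty with rfl | hne
  · simp
  · exact ((Nat.floor_lt (by positivity)).1 (hexp I (mem_Icc.2 ⟨card_pos.2 hne, hI⟩))).le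

/-- Existence of lossless expanders: for every `θ ∈ (0,1)` there is `c_θ > 0` such that
for all `1 ≤ s ≤ n`, with `d = ⌈(2·log(n/s) + 2)/θ⌉`, and every
`c_θ · s · (log(n/s) + 1) ≤ m ≤ n`, there exists a left `d`-regular bipartite graph
with `n` left and `m` right vertices that is an `(s, d, θ)`-lossless expander. -/
theorem lossless_expander_exists (θ : ℝ) (hθ0 : 0 < θ) (hθ1 : θ < 1) :
    ∃ c : ℝ, 0 < c ∧
      ∀ n s : ℕ, 1 ≤ s → s ≤ n →
        ∀ d : ℕ, d = ⌈(2 * Real.log ((n : ℝ) / s) + 2) / θ⌉₊ →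
          ∀ m : ℕ, c * s * (Real.log ((n : ℝ) / s) + 1) ≤ m → m ≤ n →
            ∃ E : Finset (Fin n × Fin m),
              LeftRegular E d ∧ IsLosslessExpander E s d θ := by
  refine ⟨exp (3 / θ) * (3 / θ), by positivity, ?_⟩
  intro n s hs hsn d hd m hm _
  set L := log ((n : ℝ) / s)
  have hsR : (0 : ℝ) < s := by exact_mod_cast hs
  have hL : 0 ≤ L := log_nonneg ((one_le_div hsR).2 (by exact_mod_cast hsn))
  have hd_low : 2 * L + 2 ≤ θ * d := by
    rw [← div_le_iff₀' hθ0, hd]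
    exact Nat.le_ceil _
  have hd_up : (d : ℝ) ≤ 3 / θ * (L + 1) := by
    have hceil : (d : ℝ) < (2 * L + 2) / θ + 1 := hd ▸ Nat.ceil_lt_add_one (by positivity)
    have hone : 1 ≤ (L + 1) / θ := (one_le_div hθ0).2 (by linarith)
    calc (d : ℝ) ≤ (2 * L + 2) / θ + (L + 1) / θ := by linarith
      _ = 3 / θ * (L + 1) := by ring
  obtain ⟨E, hE⟩ := exists_isLosslessExpander hθ0 hθ1 hs hsn hd_low
    (calc exp (3 / θ) * s * d ≤ exp (3 / θ) * s * (3 / θ * (L + 1)) := by gcongr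
      _ = exp (3 / θ) * (3 / θ) * s * (L + 1) := by ring
      _ ≤ m := hm)
  exact ⟨E, hE.1, hE⟩
end
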